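/- arXiv:2603.02947 — 9 statements merged into one kernel-verified Lean document; each statement's English description precedes it below -/
import Mathlib

section
/- Let K be a set of k positive integers and let D be a simple digraph (no loops or parallel arcs) in which every directed cycle has length belonging to K. Then D is k-degenerate, i.e., every subdigraph of D (including D itself) contains a vertex whose indegree or outdegree in that subdigraph is at most k. -/
/-!
Take a directed path `v = x₀ → x₁ → ⋯ → xₘ` in `S` that cannot be extended backwards (a longest
one, say). Every in-neighbour `u` of `v` in `S` then lies on it, `u = xᵢ`, and
`x₀ → ⋯ → xᵢ → x₀` is a directed cycle of length `i + 1`. Distinct in-neighbours give distinct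
lengths, all in `K`, so `v` has indegree at most `|K|` in `S`.
-/

/-- A directed cycle of length `n` in the digraph with arc relation `A`:
an injective map `f : ZMod n → V` with an arc from each vertex to the next. -/
def IsDicycle {V : Type*} (A : V → V → Prop) (n : ℕ) (f : ZMod n → V) : Prop :=
  0 < n ∧ Function.Injective f ∧ ∀ i, A (f i) (f (i + 1))

/-- A set of vertices is acyclic if it contains no directed cycle. -/
def AcyclicSet {V : Type*} (A : V → V → Prop) (S : Set V) : Prop :=
  ∀ (n : ℕ) (f : ZMod n → V), (∀ i, f i ∈ S) → ¬ IsDicycle A n f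

/-- The dichromatic number: least `k` such that the vertices can be colored with `k`
colors with every color class acyclic. -/
noncomputable def dichromatic {V : Type*} (A : V → V → Prop) : ℕ :=
  sInf {k | ∃ c : V → Fin k, ∀ i, AcyclicSet A (c ⁻¹' {i})}

/-- The maximum size of an acyclic set of vertices. -/
noncomputable def maxAcyclic {V : Type*} [Fintype V] (A : V → V → Prop) : ℕ :=
  sSup {k | ∃ S : Finset V, AcyclicSet A ↑S ∧ S.card = k}

section

variable {V : Type*} {A : V → V → Prop}

theorem exists_isDicycle_of_isChain {l : List V} (hnd : l.Nodup) (hch : l.IsChain A) {i : ℕ}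
    (hi : i < l.length) (hclose : A l[i] l[0]) : ∃ f : ZMod (i + 1) → V, IsDicycle A (i + 1) f := by
  refine ⟨fun j => l[j.val]'(by have := ZMod.val_lt j; omega), i.succ_pos, ?_, fun j => ?_⟩
  · intro j₁ j₂ h
    have hval := congrArg Fin.val (List.nodup_iff_injective_get.mp hnd h)
    exact ZMod.val_injective (i + 1) hval
  · have hj : j.val ≤ i := Nat.lt_succ_iff.mp (ZMod.val_lt j)
    have hsucc : (j + 1).val = (j.val + 1) % (i + 1) := by
      rw [← ZMod.val_natCast, Nat.cast_add, ZMod.natCast_zmod_val, Nat.cast_one]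
    rcases hj.lt_or_eq with hlt | heq
    · simp only [hsucc, Nat.mod_eq_of_lt (Nat.succ_lt_succ hlt)]
      exact List.isChain_iff_getElem.mp hch _ (by omega)
    · simp only [hsucc, heq, Nat.mod_self]
      exact hclose

variable (A) in
def IsPathIn (S : Finset V) (l : List V) : Prop :=
  l.Nodup ∧ (∀ x ∈ l, x ∈ S) ∧ l.IsChain A

theorem IsPathIn.length_le_card {S : Finset V} {l : List V} (hl : IsPathIn A S l) :
    l.length ≤ S.card := by
  classical
  rw [← List.toFinset_card_of_nodup hl.1]
  exact Finset.card_le_card fun x hx => hl.2.1 x (List.mem_toFinset.mp hx)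

theorem IsPathIn.cons {S : Finset V} {v u : V} {l : List V} (hl : IsPathIn A S (v :: l))
    (huS : u ∈ S) (hu : u ∉ v :: l) (huv : A u v) : IsPathIn A S (u :: v :: l) :=
  ⟨List.nodup_cons.mpr ⟨hu, hl.1⟩, List.forall_mem_cons.mpr ⟨huS, hl.2.1⟩,
    List.isChain_cons_cons.mpr ⟨huv, hl.2.2⟩⟩

theorem exists_isPathIn_forall_inNeighbor_mem {S : Finset V} (hS : S.Nonempty) :
    ∃ v l, IsPathIn A S (v :: l) ∧ ∀ u ∈ S, A u v → u ∈ v :: l := by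
  by_contra! hext
  have hlong : ∀ n : ℕ, ∃ v l, IsPathIn A S (v :: l) ∧ l.length = n := by
    intro n
    induction n with
    | zero =>
      obtain ⟨v, hv⟩ := hS
      exact ⟨v, [], ⟨List.nodup_singleton v, by simpa using hv, List.isChain_singleton v⟩, rfl⟩
    | succ n ih =>
      obtain ⟨v, l, hl, rfl⟩ := ih
      obtain ⟨u, huS, huv, hu⟩ := hext v l hl
      exact ⟨u, v :: l, hl.cons huS hu huv, rfl⟩
  obtain ⟨v, l, hl, hlen⟩ := hlong S.card
  have := hl.length_le_card
  simp only [List.length_cons] at this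
  omega

theorem exists_mem_card_inNeighbors_le {K : Finset ℕ}
    (hcyc : ∀ (n : ℕ) (f : ZMod n → V), IsDicycle A n f → n ∈ K) [DecidableRel A]
    {S : Finset V} (hS : S.Nonempty) :
    ∃ v ∈ S, (S.filter (fun u => A u v)).card ≤ K.card := by
  classical
  obtain ⟨v, l, hl, hin⟩ := exists_isPathIn_forall_inNeighbor_mem (A := A) hS
  refine ⟨v, hl.2.1 v List.mem_cons_self, ?_⟩
  have hmem : ∀ u ∈ S.filter (fun u => A u v), u ∈ v :: l := fun u hu =>
    hin u (Finset.mem_filter.mp hu).1 (Finset.mem_filter.mp hu).2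
  refine Finset.card_le_card_of_injOn (fun u => (v :: l).idxOf u + 1) (fun u hu => ?_)
    fun u₁ hu₁ u₂ hu₂ h => (List.idxOf_inj (hmem u₁ hu₁)).mp (Nat.succ_injective h)
  have hi := List.idxOf_lt_length_of_mem (hmem u hu)
  obtain ⟨f, hf⟩ := exists_isDicycle_of_isChain hl.1 hl.2.2 hi
    (by simpa [List.getElem_idxOf] using (Finset.mem_filter.mp hu).2)
  exact hcyc _ f hf

end

theorem stmt0_general {V : Type*} (A : V → V → Prop) [DecidableRel A]
    (K : Finset ℕ)
    (hcyc : ∀ (n : ℕ) (f : ZMod n → V), IsDicycle A n f → n ∈ K)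
    (S : Finset V) (hS : S.Nonempty) :
    ∃ v ∈ S, (S.filter (fun u => A u v)).card ≤ K.card ∨
      (S.filter (fun u => A v u)).card ≤ K.card := by
  obtain ⟨v, hv, hdeg⟩ := exists_mem_card_inNeighbors_le hcyc hS
  exact ⟨v, hv, Or.inl hdeg⟩

/-- If `D` is a simple digraph in which every directed cycle has length in a
set `K` of `k` positive integers, then `D` is `k`-degenerate: every (nonempty) subdigraph
has a vertex of indegree or outdegree at most `k` in that subdigraph. -/
theorem stmt0 {V : Type*} [Fintype V] [DecidableEq V] (A : V → V → Prop) [DecidableRel A]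
    (hirr : Irreflexive A) (K : Finset ℕ) (hKpos : ∀ m ∈ K, 0 < m)
    (hcyc : ∀ (n : ℕ) (f : ZMod n → V), IsDicycle A n f → n ∈ K)
    (S : Finset V) (hS : S.Nonempty) :
    ∃ v ∈ S, (S.filter (fun u => A u v)).card ≤ K.card ∨
      (S.filter (fun u => A v u)).card ≤ K.card :=
  stmt0_general A K hcyc S hS
end

section
/- Let D be a loop-free digraph with a k-degeneracy order v_1, ..., v_n (each v_j has indegree or outdegree at most k in the subdigraph induced on {v_1,...,v_j}). Then for any assignment of lists L(v) of size at least k+1 to the vertices, D admits an L-coloring in which no directed cycle is monochromatic. -/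
/-!
Colour the vertices greedily along the degeneracy order, giving `v_j` a colour from its list that
differs from the colours of its earlier in-neighbours if `v_j` has at most `k` of them, and from
those of its earlier out-neighbours otherwise; at most `k` colours are forbidden, so a list of
size `k + 1` always has one left. In a monochromatic directed cycle, the latest vertex `v_j` has
both its predecessor and its successor on the cycle among its earlier neighbours, an in-neighbour
and an out-neighbour respectively, and one of the two was forced to get a different colour.
-/

open Finset Function

theorem exists_listColoring_of_card_lt {ι α : Type*} [LinearOrder ι] [Fintype ι] [DecidableEq α]
    (N : ι → Finset ι) (hN : ∀ j, ∀ i ∈ N j, i < j) (L : ι → Finset α)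
    (hL : ∀ j, (N j).card < (L j).card) :
    ∃ c : ι → α, ∀ j, c j ∈ L j ∧ ∀ i ∈ N j, c i ≠ c j := by
  rcases isEmpty_or_nonempty ι with hι | hι
  · exact ⟨isEmptyElim, isEmptyElim⟩
  obtain ⟨a₀, -⟩ := card_pos.1 (Nat.zero_lt_of_lt (hL hι.some))
  suffices ∀ s : Finset ι, ∃ c : ι → α, ∀ j ∈ s, c j ∈ L j ∧ ∀ i ∈ N j, c i ≠ c j by
    simpa using this univ
  intro s
  induction s using Finset.induction_on_max with
  | empty => exact ⟨fun _ => a₀, by simp⟩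
  | insert a s hs ih =>
    obtain ⟨c, hc⟩ := ih
    obtain ⟨x, hxL, hx⟩ := exists_mem_notMem_of_card_lt_card (card_image_le.trans_lt (hL a))
    have hupd : ∀ i < a, update c a x i = c i := fun i hi => update_of_ne hi.ne _ _
    refine ⟨update c a x, fun j hj => ?_⟩
    rcases mem_insert.1 hj with rfl | hj
    · refine ⟨by simpa using hxL, fun i hi => ?_⟩
      rw [hupd i (hN _ i hi), update_self]
      exact fun h => hx (h ▸ mem_image_of_mem c hi)
    · have hja := hs j hj
      rw [hupd j hja]
      refine ⟨(hc j hj).1, fun i hi => ?_⟩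
      rw [hupd i ((hN j i hi).trans hja)]
      exact (hc j hj).2 i hi

section Dicycle

variable {V : Type*} {A : V → V → Prop} {n : ℕ} {f : ZMod n → V}

theorem IsDicycle.one_lt [Std.Irrefl A] (h : IsDicycle A n f) : 1 < n := by
  obtain ⟨hn, -, harc⟩ := h
  refine lt_of_le_of_ne hn fun h1 => ?_
  subst h1
  have hloop := harc 0
  rw [show (0 : ZMod 1) + 1 = 0 from Subsingleton.elim _ _] at hloop
  exact irrefl _ hloop

theorem IsDicycle.exists_neighbors_lt {ι : Type*} [LinearOrder ι] [Std.Irrefl A]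
    (h : IsDicycle A n f) (r : V → ι) (hr : Injective r) :
    ∃ i, r (f (i - 1)) < r (f i) ∧ r (f (i + 1)) < r (f i) := by
  have hn := h.one_lt
  have : NeZero n := ⟨by omega⟩
  have : Nontrivial (ZMod n) := ZMod.nontrivial_iff.2 (by omega)
  have hrf : Injective (r ∘ f) := hr.comp h.2.1
  obtain ⟨i, hi⟩ := Finite.exists_max (r ∘ f)
  refine ⟨i, (hi _).lt_of_ne fun he => ?_, (hi _).lt_of_ne fun he => ?_⟩
  · exact one_ne_zero (sub_eq_self.1 (hrf he))
  · exact one_ne_zero (add_eq_left.1 (hrf he))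

theorem acyclicSet_preimage_of_separates_earlier {ι α : Type*} [LinearOrder ι]
    [Std.Irrefl A] (r : V → ι) (hr : Injective r) (c : V → α)
    (hc : ∀ v, (∀ u, r u < r v → A u v → c u ≠ c v) ∨ (∀ u, r u < r v → A v u → c u ≠ c v))
    (a : α) : AcyclicSet A (c ⁻¹' {a}) := by
  intro n f hf hcyc
  have hcol : ∀ j, c (f j) = a := hf
  obtain ⟨i, hpred, hsucc⟩ := hcyc.exists_neighbors_lt r hr
  rcases hc (f i) with hin | hout
  · exact hin _ hpred (by simpa using hcyc.2.2 (i - 1)) (by rw [hcol, hcol])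
  · exact hout _ hsucc (hcyc.2.2 i) (by rw [hcol, hcol])

end Dicycle

theorem stmt1_general {V : Type*} [Fintype V] (A : V → V → Prop) [DecidableRel A]
    (hirr : Irreflexive A) (k : ℕ) (e : Fin (Fintype.card V) ≃ V)
    (hdeg : ∀ j : Fin (Fintype.card V),
      (Finset.univ.filter (fun i : Fin (Fintype.card V) => i ≤ j ∧ A (e i) (e j))).card ≤ k ∨
      (Finset.univ.filter (fun i : Fin (Fintype.card V) => i ≤ j ∧ A (e j) (e i))).card ≤ k)
    (L : V → Finset ℕ) (hL : ∀ v, k + 1 ≤ (L v).card) :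
    ∃ c : V → ℕ, (∀ v, c v ∈ L v) ∧ ∀ col : ℕ, AcyclicSet A (c ⁻¹' {col}) := by
  have : Std.Irrefl A := ⟨hirr⟩
  let inBack := fun j : Fin (Fintype.card V) => univ.filter (fun i => i ≤ j ∧ A (e i) (e j))
  let outBack := fun j : Fin (Fintype.card V) => univ.filter (fun i => i ≤ j ∧ A (e j) (e i))
  let N j := {i ∈ if (inBack j).card ≤ k then inBack j else outBack j | i < j}
  have hNk : ∀ j, (N j).card ≤ k := fun j => (card_filter_le _ _).trans <| by
    split_ifs with h
    exacts [h, (hdeg j).resolve_left h]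
  obtain ⟨c, hc⟩ := exists_listColoring_of_card_lt N (fun j i hi => (mem_filter.1 hi).2)
    (fun j => L (e j)) (fun j => (hNk j).trans_lt (hL (e j)))
  refine ⟨c ∘ e.symm, fun v => by simpa using (hc (e.symm v)).1,
    acyclicSet_preimage_of_separates_earlier e.symm e.symm.injective _ fun v => ?_⟩
  by_cases h : (inBack (e.symm v)).card ≤ k
  · exact .inl fun u hu huv => (hc _).2 _ <| by
      simp only [N, if_pos h]; simp [inBack, hu, hu.le, huv]
  · exact .inr fun u hu hvu => (hc _).2 _ <| by
      simp only [N, if_neg h]; simp [outBack, hu, hu.le, hvu]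

/-- A loop-free digraph with a `k`-degeneracy order (given by an enumeration
`e` of the vertices in which each vertex has indegree or outdegree at most `k` in the
subdigraph induced on it and the earlier vertices) is list-colorable from any lists of
size at least `k+1` with no monochromatic directed cycle. -/
theorem stmt1 {V : Type*} [Fintype V] [DecidableEq V] (A : V → V → Prop) [DecidableRel A]
    (hirr : Irreflexive A) (k : ℕ) (e : Fin (Fintype.card V) ≃ V)
    (hdeg : ∀ j : Fin (Fintype.card V),
      (Finset.univ.filter (fun i : Fin (Fintype.card V) => i ≤ j ∧ A (e i) (e j))).card ≤ k ∨
      (Finset.univ.filter (fun i : Fin (Fintype.card V) => i ≤ j ∧ A (e j) (e i))).card ≤ k)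
    (L : V → Finset ℕ) (hL : ∀ v, k + 1 ≤ (L v).card) :
    ∃ c : V → ℕ, (∀ v, c v ∈ L v) ∧ ∀ col : ℕ, AcyclicSet A (c ⁻¹' {col}) :=
  stmt1_general A hirr k e hdeg L hL
end

section
/- Let D be an oriented graph (simple digraph with no digons) whose longest directed cycle has length s, where s ≥ 3. Then the list dichromatic number of D is at most s−1. -/
/-!
A longest directed path inside a vertex set `S` ends at a vertex `v` all of whose out-neighbours
in `S` lie on the path. The earliest of them closes a directed cycle through all of them, through
`v`, and through the predecessor of `v`, which is not an out-neighbour of `v` since there are no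
digons. So `v` has at most `s - 2` out-neighbours in `S`. Colouring such vertices greedily, each
vertex gets a colour from its list (of size `s - 1`) unused by its out-neighbours coloured
before it; a monochromatic cycle through the last-coloured of its vertices would have to leave it
through such an out-neighbour.
-/

open Finset

section

variable {V : Type*} {A : V → V → Prop}

/-- `p 0, …, p (k - 1)` is a directed path with all its vertices in `S`; the values of `p` from
`k` on play no role. -/
structure IsDipathIn (A : V → V → Prop) (S : Set V) (k : ℕ) (p : ℕ → V) : Prop where
  mem : ∀ i < k, p i ∈ S
  injOn : Set.InjOn p (Set.Iio k)
  adj : ∀ i, i + 1 < k → A (p i) (p (i + 1))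

namespace IsDipathIn

variable {S : Set V} {k : ℕ} {p : ℕ → V}

lemma length_le_card {S : Finset V} (hp : IsDipathIn A S k p) : k ≤ #S := by
  simpa using card_le_card_of_injOn p (s := range k) (fun i hi => hp.mem i (mem_range.1 hi))
    (by simpa using hp.injOn)

lemma snoc [DecidableEq V] (hp : IsDipathIn A S k p) (hk : 0 < k) {w : V} (hwS : w ∈ S)
    (hw : ∀ i < k, p i ≠ w) (harc : A (p (k - 1)) w) :
    IsDipathIn A S (k + 1) (Function.update p k w) := by
  refine ⟨fun i hi => ?_, fun a ha b hb hab => ?_, fun i hi => ?_⟩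
  · rcases eq_or_ne i k with rfl | hik
    · simpa using hwS
    · simpa [hik] using hp.mem i (by omega)
  · simp only [Set.mem_Iio] at ha hb
    rcases eq_or_ne a k with hak | hak <;> rcases eq_or_ne b k with hbk | hbk
    · exact hak.trans hbk.symm
    · simp only [hak, Function.update_self, Function.update_of_ne hbk] at hab
      exact absurd hab.symm (hw b (by omega))
    · simp only [hbk, Function.update_self, Function.update_of_ne hak] at hab
      exact absurd hab (hw a (by omega))
    · simp only [Function.update_of_ne hak, Function.update_of_ne hbk] at hab
      exact hp.injOn (by simp; omega) (by simp; omega) hab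
  · rw [Function.update_of_ne (by omega : i ≠ k)]
    rcases eq_or_ne (i + 1) k with hik | hik
    · rw [hik, Function.update_self]
      rwa [show k - 1 = i by omega] at harc
    · simpa [hik] using hp.adj i (by omega)

lemma drop (hp : IsDipathIn A S k p) (j : ℕ) : IsDipathIn A S (k - j) (fun i => p (j + i)) := by
  refine ⟨fun i hi => hp.mem _ (by omega), fun a ha b hb hab => ?_, fun i hi => ?_⟩
  · simp only [Set.mem_Iio] at ha hb
    have := hp.injOn (by simp; omega) (by simp; omega) hab
    omega
  · simpa [add_assoc] using hp.adj (j + i) (by omega)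

lemma isDicycle (hp : IsDipathIn A S k p) (hk : 0 < k) (hclose : A (p (k - 1)) (p 0)) :
    IsDicycle A k (fun i : ZMod k => p i.val) := by
  have : NeZero k := ⟨hk.ne'⟩
  refine ⟨hk, fun a b hab => ZMod.val_injective k ?_, fun i => ?_⟩
  · exact hp.injOn (by simpa using ZMod.val_lt a) (by simpa using ZMod.val_lt b) hab
  · have hsucc : (i + 1).val = (i.val + 1) % k := by
      rw [ZMod.val_add, ZMod.val_one_eq_one_mod, Nat.add_mod_mod]
    have hi := ZMod.val_lt i
    rcases Nat.lt_or_ge (i.val + 1) k with hlt | hge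
    · simpa [hsucc, Nat.mod_eq_of_lt hlt] using hp.adj i.val hlt
    · have hlast : i.val = k - 1 := by omega
      show A (p i.val) (p (i + 1).val)
      rw [hsucc, show i.val + 1 = k by omega, Nat.mod_self, hlast]
      exact hclose

end IsDipathIn

lemma exists_maximal_isDipathIn {S : Finset V} (hS : S.Nonempty) :
    ∃ k p, 0 < k ∧ IsDipathIn A S k p ∧ ∀ w ∈ S, A (p (k - 1)) w → ∃ i < k, p i = w := by
  classical
  obtain ⟨v₀, hv₀⟩ := hS
  let P k := ∃ p, IsDipathIn A S k p
  have hP1 : P 1 := ⟨fun _ => v₀, by simp [hv₀], by simp, by simp⟩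
  have hle : 1 ≤ #S := card_pos.2 ⟨v₀, hv₀⟩
  obtain ⟨p, hp⟩ : P (Nat.findGreatest P #S) := Nat.findGreatest_spec hle hP1
  have hk : 0 < Nat.findGreatest P #S := Nat.le_findGreatest hle hP1
  refine ⟨_, p, hk, hp, fun w hwS harc => ?_⟩
  by_contra! hw
  have hlonger := hp.snoc hk hwS hw harc
  exact Nat.findGreatest_is_greatest (Nat.lt_succ_self _) hlonger.length_le_card ⟨_, hlonger⟩

theorem exists_outdegree_le_of_circumference_le [DecidableRel A]
    (hA : ∀ u v, A u v → ¬ A v u) {s : ℕ} (hcyc : ∀ n f, IsDicycle A n f → n ≤ s)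
    {S : Finset V} (hS : S.Nonempty) : ∃ v ∈ S, #{w ∈ S | A v w} ≤ s - 2 := by
  classical
  obtain ⟨k, p, hk, hp, hmax⟩ := exists_maximal_isDipathIn (A := A) hS
  refine ⟨p (k - 1), hp.mem _ (by omega), ?_⟩
  rcases {w ∈ S | A (p (k - 1)) w}.eq_empty_or_nonempty with hN | ⟨w₀, hw₀⟩
  · simp [hN]
  have hN : ∃ i, i < k ∧ A (p (k - 1)) (p i) := by
    obtain ⟨i, hi, rfl⟩ := hmax w₀ (mem_filter.1 hw₀).1 (mem_filter.1 hw₀).2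
    exact ⟨i, hi, (mem_filter.1 hw₀).2⟩
  obtain ⟨hj, hclose⟩ := Nat.find_spec hN
  set j := Nat.find hN
  have hcycle := (hp.drop j).isDicycle (by omega)
    (by simpa [show j + (k - j - 1) = k - 1 by omega] using hclose)
  have hlen := hcyc _ _ hcycle
  -- The out-neighbours sit at indices `≥ j`, and neither at `k - 1` (no loops) nor `k - 2`
  -- (no digons).
  have hsub : {w ∈ S | A (p (k - 1)) w} ⊆ (Ico j (k - 2)).image p := by
    intro w hw
    obtain ⟨hwS, harc⟩ := mem_filter.1 hw
    obtain ⟨i, hi, rfl⟩ := hmax w hwS harc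
    refine mem_image_of_mem p (mem_Ico.2 ⟨Nat.find_min' hN ⟨hi, harc⟩, ?_⟩)
    by_contra hge
    rcases (by omega : i = k - 1 ∨ i + 1 = k - 1) with rfl | hik
    · exact hA _ _ harc harc
    · exact hA _ _ harc (hik ▸ hp.adj i (by omega))
  calc #{w ∈ S | A (p (k - 1)) w} ≤ #((Ico j (k - 2)).image p) := card_le_card hsub
    _ ≤ #(Ico j (k - 2)) := card_image_le
    _ ≤ s - 2 := by simp; omega

lemma acyclicSet_inter_preimage_update [DecidableEq V] {C : Type*} (hirr : ∀ v, ¬ A v v)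
    {S : Finset V} {v : V} {c : V → C} {α : C}
    (hc : ∀ col, AcyclicSet A (↑(S.erase v) ∩ c ⁻¹' {col})) (hα : ∀ w ∈ S, A v w → c w ≠ α)
    (col : C) : AcyclicSet A (↑S ∩ Function.update c v α ⁻¹' {col}) := by
  intro n f hf hcycle
  by_cases hv : ∃ i, f i = v
  · obtain ⟨i, rfl⟩ := hv
    have harc := hcycle.2.2 i
    have hne : f (i + 1) ≠ f i := fun h => hirr _ (h ▸ harc)
    obtain ⟨-, hcol⟩ := hf i
    obtain ⟨hS, hcol'⟩ := hf (i + 1)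
    simp only [Set.mem_preimage, Set.mem_singleton_iff, Function.update_self,
      Function.update_of_ne hne] at hcol hcol'
    exact hα _ hS harc (hcol'.trans hcol.symm)
  · push Not at hv
    refine hc col n f (fun i => ⟨mem_erase.2 ⟨hv i, (hf i).1⟩, ?_⟩) hcycle
    simpa [Function.update_of_ne (hv i)] using (hf i).2

lemma exists_list_coloring_acyclicOn [DecidableRel A] {C : Type*} (hirr : ∀ v, ¬ A v v)
    (L : V → Finset C) (hdeg : ∀ S : Finset V, S.Nonempty → ∃ v ∈ S, #{w ∈ S | A v w} < #(L v))
    (S : Finset V) : ∃ c : V → C, (∀ v, c v ∈ L v) ∧ ∀ col, AcyclicSet A (↑S ∩ c ⁻¹' {col}) := by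
  classical
  induction S using Finset.strongInduction with | _ S ih => ?_
  rcases S.eq_empty_or_nonempty with rfl | hS
  · have hL (v : V) : (L v).Nonempty := by
      obtain ⟨u, hu, h⟩ := hdeg {v} (singleton_nonempty v)
      rw [mem_singleton.1 hu] at h
      exact card_pos.1 ((Nat.zero_le _).trans_lt h)
    exact ⟨fun v => (hL v).choose, fun v => (hL v).choose_spec,
      fun col n f hf _ => by simpa using (hf 0).1⟩
  obtain ⟨v, hv, hlt⟩ := hdeg S hS
  obtain ⟨c, hcL, hc⟩ := ih (S.erase v) (erase_ssubset hv)
  obtain ⟨α, hα⟩ : (L v \ {w ∈ S | A v w}.image c).Nonempty := by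
    have := le_card_sdiff ({w ∈ S | A v w}.image c) (L v)
    have := card_image_le (s := {w ∈ S | A v w}) (f := c)
    exact card_pos.1 (by omega)
  obtain ⟨hαL, hαc⟩ := mem_sdiff.1 hα
  refine ⟨Function.update c v α, fun u => ?_, acyclicSet_inter_preimage_update hirr hc ?_⟩
  · rcases eq_or_ne u v with rfl | hu
    · simpa using hαL
    · simpa [hu] using hcL u
  · exact fun w hwS harc hcw => hαc (mem_image.2 ⟨w, mem_filter.2 ⟨hwS, harc⟩, hcw⟩)

theorem exists_acyclic_list_coloring [Fintype V] [DecidableRel A] {C : Type*}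
    (hirr : ∀ v, ¬ A v v) (L : V → Finset C)
    (hdeg : ∀ S : Finset V, S.Nonempty → ∃ v ∈ S, #{w ∈ S | A v w} < #(L v)) :
    ∃ c : V → C, (∀ v, c v ∈ L v) ∧ ∀ col, AcyclicSet A (c ⁻¹' {col}) := by
  simpa using exists_list_coloring_acyclicOn hirr L hdeg univ

end

theorem stmt3_general {V : Type*} [Fintype V] (A : V → V → Prop)
    (hA : ∀ u v, A u v → ¬ A v u) (s : ℕ) (hs : 3 ≤ s)
    (hcyc : ∀ (n : ℕ) (f : ZMod n → V), IsDicycle A n f → n ≤ s)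
    (L : V → Finset ℕ) (hL : ∀ v, s - 1 ≤ (L v).card) :
    ∃ c : V → ℕ, (∀ v, c v ∈ L v) ∧ ∀ col : ℕ, AcyclicSet A (c ⁻¹' {col}) := by
  classical
  refine exists_acyclic_list_coloring (fun v h => hA v v h h) L fun S hS => ?_
  obtain ⟨v, hv, hdeg⟩ := exists_outdegree_le_of_circumference_le hA hcyc hS
  exact ⟨v, hv, by have := hL v; omega⟩

/-- If `D` is an oriented graph (no loops, digons or parallel arcs) whose
longest directed cycle has length `s ≥ 3`, then the list dichromatic number of `D` is at
most `s - 1`. -/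
theorem stmt3 {V : Type*} [Fintype V] (A : V → V → Prop)
    (hA : ∀ u v, A u v → ¬ A v u) (s : ℕ) (hs : 3 ≤ s)
    (hex : ∃ f : ZMod s → V, IsDicycle A s f)
    (hcyc : ∀ (n : ℕ) (f : ZMod n → V), IsDicycle A n f → n ≤ s)
    (L : V → Finset ℕ) (hL : ∀ v, s - 1 ≤ (L v).card) :
    ∃ c : V → ℕ, (∀ v, c v ∈ L v) ∧ ∀ col : ℕ, AcyclicSet A (c ⁻¹' {col}) :=
  stmt3_general A hA s hs hcyc L hL
end

section
/- For all positive integers s and n with s ≤ n, there exists a tournament T on n vertices whose longest directed cycle has length at most s, such that the maximum size of an acyclic set in T is at most (4n/s)·log₂(2s), and consequently the dichromatic number of T is at least s/(4·log₂(2s)). -/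
/-!
Let `k = 2⌊log₂ s⌋ + 3`. Since `s ^ k < 2 ^ (k choose 2)`, Erdős's counting argument gives a
tournament `G` on `s` vertices with no transitive subtournament on `k` vertices; as an acyclic set
of a tournament is transitive, every acyclic set of `G` has at most `k - 1` vertices. Cut the `n`
vertices into `⌈n/s⌉` consecutive blocks of size at most `s`, orient all arcs between blocks
forward and put a copy of `G` inside each block. A directed cycle cannot leave a block, so it has
length at most `s`, and an acyclic set meets each block in at most `k - 1` vertices. The bound on
`χ⃗` follows from `n ≤ χ⃗ · α⃗`.
-/

open Finset Function

structure IsTournament {V : Type*} (A : V → V → Prop) : Prop where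
  asymm : ∀ u v, A u v → ¬ A v u
  total : ∀ u v, u ≠ v → A u v ∨ A v u

def IsTransitiveOrdering {V : Type*} (A : V → V → Prop) {k : ℕ} (e : Fin k ↪ V) : Prop :=
  ∀ ⦃i j⦄, i < j → A (e i) (e j)

section Acyclic

variable {V : Type*} {A : V → V → Prop}

lemma IsTournament.irrefl (hA : IsTournament A) (v : V) : ¬ A v v :=
  fun h => hA.asymm v v h h

lemma AcyclicSet.empty : AcyclicSet A ∅ := fun _ _ hf _ => hf 0

lemma Set.Subsingleton.acyclicSet (hA : ∀ v, ¬ A v v) {S : Set V} (hS : S.Subsingleton) :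
    AcyclicSet A S := by
  rintro _ f hf ⟨-, -, harc⟩
  have h01 := harc 0
  rw [zero_add, ← hS (hf 0) (hf 1)] at h01
  exact hA _ h01

lemma AcyclicSet.not_threeCycle (hA : IsTournament A) {S : Set V} (hS : AcyclicSet A S)
    {a b c : V} (ha : a ∈ S) (hb : b ∈ S) (hc : c ∈ S) (hab : A a b) (hbc : A b c)
    (hca : A c a) : False := by
  have hab' : a ≠ b := fun h => hA.irrefl a (h ▸ hab)
  have hbc' : b ≠ c := fun h => hA.irrefl b (h ▸ hbc)
  have hca' : c ≠ a := fun h => hA.irrefl c (h ▸ hca)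
  refine hS 3 ![a, b, c] (fun i => by fin_cases i <;> assumption) ⟨by norm_num, ?_, ?_⟩
  · intro i j h
    fin_cases i <;> fin_cases j <;> first | rfl | simp_all [eq_comm]
  · intro i
    fin_cases i <;> assumption

lemma AcyclicSet.trans (hA : IsTournament A) {S : Set V} (hS : AcyclicSet A S)
    {a b c : V} (ha : a ∈ S) (hb : b ∈ S) (hc : c ∈ S) (hab : A a b) (hbc : A b c) :
    A a c :=
  (hA.total a c fun h => hA.asymm a b hab (h ▸ hbc)).resolve_right
    (hS.not_threeCycle hA ha hb hc hab hbc)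

/-- Inside an acyclic set, the arcs of a tournament form a strict total order. -/
lemma AcyclicSet.exists_transitiveOrdering (hA : IsTournament A) {S : Finset V}
    (hS : AcyclicSet A ↑S) : ∃ e : Fin #S ↪ V, IsTransitiveOrdering A e := by
  classical
  let r : S → S → Prop := fun x y => A x y
  have : IsStrictTotalOrder S r :=
    { trichotomous := fun x y hxy hyx => by_contra fun h =>
        (hA.total x y (Subtype.coe_injective.ne h)).elim hxy hyx
      irrefl := fun x => hA.irrefl x
      trans := fun x y z => hS.trans hA x.2 y.2 z.2 }
  let := linearOrderOfSTO r
  let iso := Fintype.orderIsoFinOfCardEq S (Fintype.card_coe S)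
  exact ⟨iso.toEquiv.toEmbedding.trans (Embedding.subtype _), fun i j hij => iso.strictMono hij⟩

lemma AcyclicSet.card_lt (hA : IsTournament A) {k : ℕ}
    (hk : ∀ e : Fin k ↪ V, ¬ IsTransitiveOrdering A e) {S : Finset V}
    (hS : AcyclicSet A ↑S) : #S < k := by
  by_contra! hle
  obtain ⟨e, he⟩ := hS.exists_transitiveOrdering hA
  exact hk ((Fin.castLEEmb hle).trans e) fun i j hij => he hij

end Acyclic

lemma card_mul_two_pow_le_of_eqOn {ι : Type*} [Fintype ι] [DecidableEq ι]
    (S : Finset (ι → Bool)) (Q : Finset ι)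
    (hS : ∀ g ∈ S, ∀ g' ∈ S, ∀ p ∈ Q, g p = g' p) :
    #S * 2 ^ #Q ≤ 2 ^ Fintype.card ι := by
  have hrestrict : #S ≤ 2 ^ #Qᶜ := by
    have := card_le_card_of_injOn (t := (univ : Finset (↥Qᶜ → Bool)))
      (fun (g : ι → Bool) (i : ↥Qᶜ) => g i) (fun _ _ => mem_univ _)
      fun g hg g' hg' h => funext fun (i : ι) => by
        by_cases hi : i ∈ Q
        · exact hS g hg g' hg' i hi
        · exact congrFun h ⟨i, mem_compl.mpr hi⟩
    simpa [card_compl] using this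
  calc #S * 2 ^ #Q ≤ 2 ^ #Qᶜ * 2 ^ #Q := Nat.mul_le_mul_right _ hrestrict
    _ = 2 ^ Fintype.card ι := by rw [← pow_add, card_compl_add_card]

section RandomTournament

variable {V : Type*} [LinearOrder V]

def tournamentOf (g : Finset V → Bool) (u v : V) : Prop :=
  u ≠ v ∧ g {u, v} = decide (u < v)

lemma isTournament_tournamentOf (g : Finset V → Bool) : IsTournament (tournamentOf g) where
  asymm u v := by
    rintro ⟨huv, h⟩ ⟨-, h'⟩
    rw [pair_comm, h'] at h
    rcases huv.lt_or_gt with hlt | hlt <;> simp [hlt, hlt.not_gt] at h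
  total u v huv := by
    unfold tournamentOf
    rw [pair_comm v u]
    rcases huv.lt_or_gt with hlt | hlt <;> cases g {u, v} <;> simp [huv, huv.symm, hlt, hlt.not_gt]

lemma IsTransitiveOrdering.tournamentOf_eq {k : ℕ} {g g' : Finset V → Bool} {e : Fin k ↪ V}
    (hg : IsTransitiveOrdering (tournamentOf g) e) (hg' : IsTransitiveOrdering (tournamentOf g') e)
    {p : Finset V} (hp : p ∈ (powersetCard 2 univ).map (mapEmbedding e).toEmbedding) :
    g p = g' p := by
  obtain ⟨t, ht, rfl⟩ := mem_map.mp hp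
  obtain ⟨i, j, hij, rfl⟩ := card_eq_two.mp (mem_powersetCard.mp ht).2
  have key : ∀ {i j}, i < j → g {e i, e j} = g' {e i, e j} := fun h =>
    (hg h).2.trans (hg' h).2.symm
  simp only [RelEmbedding.coe_toEmbedding, mapEmbedding_apply, map_insert, map_singleton]
  rcases hij.lt_or_gt with h | h
  · exact key h
  · rw [pair_comm]; exact key h

variable [Fintype V]

/-- Erdős's counting argument: each `k`-embedding is transitive for a `2 ^ -(k choose 2)`
fraction of all tournaments. -/
theorem exists_tournament_forall_not_isTransitiveOrdering {k : ℕ}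
    (h : Fintype.card V ^ k < 2 ^ k.choose 2) :
    ∃ A : V → V → Prop, IsTournament A ∧
      ∀ e : Fin k ↪ V, ¬ IsTransitiveOrdering A e := by
  classical
  let bad (e : Fin k ↪ V) : Finset (Finset V → Bool) :=
    univ.filter fun g => IsTransitiveOrdering (tournamentOf g) e
  have hbad (e : Fin k ↪ V) : #(bad e) * 2 ^ k.choose 2 ≤ 2 ^ Fintype.card (Finset V) := by
    have := card_mul_two_pow_le_of_eqOn (bad e)
      ((powersetCard 2 univ).map (mapEmbedding e).toEmbedding)
      fun g hg g' hg' p hp => (mem_filter.mp hg).2.tournamentOf_eq (mem_filter.mp hg').2 hp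
    rwa [card_map, card_powersetCard, card_univ, Fintype.card_fin] at this
  suffices ∃ g, ∀ e, g ∉ bad e from
    let ⟨g, hg⟩ := this
    ⟨tournamentOf g, isTournament_tournamentOf g,
      fun e he => hg e (mem_filter.mpr ⟨mem_univ _, he⟩)⟩
  by_contra! hcover
  set N := Fintype.card (Finset V)
  have hsum : 2 ^ N ≤ ∑ e, #(bad e) := by
    calc 2 ^ N = #(univ : Finset (Finset V → Bool)) := by simp [N]
      _ ≤ #(univ.biUnion bad) := card_le_card fun g _ => mem_biUnion.mpr (by simpa using hcover g)
      _ ≤ ∑ e, #(bad e) := card_biUnion_le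
  have : 2 ^ N * 2 ^ k.choose 2 < 2 ^ N * 2 ^ k.choose 2 := calc
    2 ^ N * 2 ^ k.choose 2 ≤ ∑ e, #(bad e) * 2 ^ k.choose 2 := by
        rw [← sum_mul]; exact Nat.mul_le_mul_right _ hsum
    _ ≤ ∑ _e : Fin k ↪ V, 2 ^ N := sum_le_sum fun e _ => hbad e
    _ ≤ Fintype.card V ^ k * 2 ^ N := by
        rw [sum_const, card_univ, smul_eq_mul, Fintype.card_embedding_eq, Fintype.card_fin]
        exact Nat.mul_le_mul_right _ (Nat.descFactorial_le_pow _ _)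
    _ < 2 ^ N * 2 ^ k.choose 2 := by
        rw [mul_comm]; exact Nat.mul_lt_mul_of_pos_left h (by positivity)
  exact lt_irrefl _ this

end RandomTournament

section Comap

variable {V W : Type*} {A : V → V → Prop} {φ : W → V}

lemma IsTournament.comap (hA : IsTournament A) (hφ : Injective φ) : IsTournament (A on φ) where
  asymm u v := hA.asymm (φ u) (φ v)
  total u v huv := hA.total (φ u) (φ v) (hφ.ne huv)

lemma IsDicycle.comp {m : ℕ} {c : ZMod m → W} (hc : IsDicycle (A on φ) m c)
    (hφ : Injective φ) : IsDicycle A m (φ ∘ c) :=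
  ⟨hc.1, hφ.comp hc.2.1, hc.2.2⟩

lemma AcyclicSet.image {S : Set W} (hS : AcyclicSet (A on φ) S) :
    AcyclicSet A (φ '' S) := by
  intro m c hc ⟨hm, hinj, harc⟩
  choose d hdS hd using hc
  have hc : c = φ ∘ d := funext fun i => (hd i).symm
  subst hc
  exact hS m d hdS ⟨hm, hinj.of_comp, harc⟩

end Comap

lemma ZMod.apply_eq_of_forall_le_add_one {α : Type*} [PartialOrder α] {m : ℕ} [NeZero m]
    {f : ZMod m → α} (hf : ∀ i, f i ≤ f (i + 1)) (i j : ZMod m) : f i = f j := by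
  have hle (i : ZMod m) (t : ℕ) : f i ≤ f (i + t) := by
    induction t with
    | zero => simp
    | succ t ih => exact ih.trans (by simpa [add_assoc] using hf (i + t))
  have hle' (i j : ZMod m) : f i ≤ f j := by
    simpa using hle i (j - i).val
  exact (hle' i j).antisymm (hle' j i)

section Lex

variable {α β : Type*} [LinearOrder α] {G : β → β → Prop}

lemma IsTournament.lex (hG : IsTournament G) : IsTournament (Prod.Lex (α := α) (· < ·) G) where
  asymm p q := by
    simp only [Prod.lex_def]
    rintro (h | ⟨h, hpq⟩) (h' | ⟨h', hqp⟩)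
    · exact h.not_gt h'
    · exact h.ne h'.symm
    · exact h'.ne h.symm
    · exact hG.asymm _ _ hpq hqp
  total p q hpq := by
    simp only [Prod.lex_def]
    rcases lt_trichotomy p.1 q.1 with h | h | h
    · exact Or.inl (Or.inl h)
    · have : p.2 ≠ q.2 := fun h2 => hpq (Prod.ext h h2)
      exact (hG.total _ _ this).imp (Or.inr ⟨h, ·⟩) (Or.inr ⟨h.symm, ·⟩)
    · exact Or.inr (Or.inl h)

/-- The first coordinate never decreases along an arc. -/
lemma IsDicycle.lex_fst_eq {m : ℕ} {c : ZMod m → α × β}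
    (hc : IsDicycle (Prod.Lex (· < ·) G) m c) (i j : ZMod m) : (c i).1 = (c j).1 := by
  have : NeZero m := ⟨hc.1.ne'⟩
  refine ZMod.apply_eq_of_forall_le_add_one (f := fun i => (c i).1) (fun i => ?_) i j
  rcases Prod.lex_def.mp (hc.2.2 i) with h | ⟨h, -⟩
  exacts [h.le, h.le]

lemma IsDicycle.length_le_card_of_lex [Fintype β] {m : ℕ} {c : ZMod m → α × β}
    (hc : IsDicycle (Prod.Lex (· < ·) G) m c) : m ≤ Fintype.card β := by
  have : NeZero m := ⟨hc.1.ne'⟩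
  have hinj : Injective fun i => (c i).2 := fun i j h =>
    hc.2.1 (Prod.ext (hc.lex_fst_eq i j) h)
  simpa using Fintype.card_le_of_injective _ hinj

lemma AcyclicSet.lex_fiber {S : Set (α × β)} (hS : AcyclicSet (Prod.Lex (· < ·) G) S)
    (a : α) : AcyclicSet G {x | (a, x) ∈ S} := fun m c hc ⟨hm, hinj, harc⟩ =>
  hS m (fun i => (a, c i)) hc
    ⟨hm, fun _ _ h => hinj (Prod.ext_iff.mp h).2, fun i => Prod.Lex.right _ (harc i)⟩

lemma AcyclicSet.card_le_of_lex [Fintype α] {t : ℕ}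
    (hG : ∀ T : Finset β, AcyclicSet G ↑T → #T ≤ t) {S : Finset (α × β)}
    (hS : AcyclicSet (Prod.Lex (· < ·) G) (S : Set (α × β))) : #S ≤ Fintype.card α * t := by
  classical
  have hfiber (a : α) : #(S.filter (·.1 = a)) ≤ t := by
    rw [← card_image_of_injOn fun p hp q hq h =>
      Prod.ext ((mem_filter.mp hp).2.trans (mem_filter.mp hq).2.symm) h]
    refine hG _ fun m c hc => hS.lex_fiber a m c fun i => ?_
    obtain ⟨p, hp, hpc⟩ := mem_image.mp (hc i)
    rw [mem_filter] at hp
    rw [← hpc, ← hp.2]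
    exact hp.1
  calc #S = ∑ a, #(S.filter (·.1 = a)) := card_eq_sum_card_fiberwise fun _ _ => mem_univ _
    _ ≤ ∑ _a : α, t := sum_le_sum fun a _ => hfiber a
    _ = Fintype.card α * t := by simp

end Lex

section Invariants

variable {V : Type*} [Fintype V] {A : V → V → Prop}

lemma le_maxAcyclic {S : Finset V} (hS : AcyclicSet A ↑S) : #S ≤ maxAcyclic A :=
  le_csSup ⟨Fintype.card V, by rintro _ ⟨T, -, rfl⟩; exact card_le_univ T⟩ ⟨S, hS, rfl⟩

lemma maxAcyclic_le {t : ℕ} (h : ∀ S : Finset V, AcyclicSet A ↑S → #S ≤ t) :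
    maxAcyclic A ≤ t :=
  csSup_le ⟨0, ∅, by simpa using AcyclicSet.empty, rfl⟩ fun _ ⟨S, hS, hk⟩ => hk ▸ h S hS

lemma card_le_dichromatic_mul_maxAcyclic (hA : ∀ v, ¬ A v v) :
    Fintype.card V ≤ dichromatic A * maxAcyclic A := by
  classical
  have hcol : {k | ∃ c : V → Fin k, ∀ i, AcyclicSet A (c ⁻¹' {i})}.Nonempty :=
    ⟨_, Fintype.equivFin V, fun i =>
      (Set.subsingleton_singleton.preimage (Equiv.injective _)).acyclicSet hA⟩
  obtain ⟨c, hc⟩ := Nat.sInf_mem hcol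
  calc Fintype.card V = ∑ i, #(univ.filter (c · = i)) :=
        card_eq_sum_card_fiberwise fun _ _ => mem_univ _
    _ ≤ ∑ _i, maxAcyclic A :=
        sum_le_sum fun i _ => le_maxAcyclic (by simpa [Set.preimage] using hc i)
    _ = dichromatic A * maxAcyclic A := by simp [dichromatic]

lemma le_dichromatic_of_maxAcyclic_le [Nonempty V] (hA : ∀ v, ¬ A v v) {x : ℝ} (hx : 0 < x)
    (h : (maxAcyclic A : ℝ) ≤ Fintype.card V / x) : x ≤ dichromatic A := by
  have hV : (0 : ℝ) < Fintype.card V := by exact_mod_cast Fintype.card_pos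
  have hcard : (Fintype.card V : ℝ) ≤ dichromatic A * maxAcyclic A := by
    exact_mod_cast card_le_dichromatic_mul_maxAcyclic hA
  rw [le_div_iff₀ hx] at h
  refine le_of_mul_le_mul_left ?_ hV
  calc (Fintype.card V : ℝ) * x ≤ dichromatic A * maxAcyclic A * x := by gcongr
    _ = dichromatic A * (maxAcyclic A * x) := by ring
    _ ≤ dichromatic A * Fintype.card V := by gcongr
    _ = Fintype.card V * dichromatic A := mul_comm _ _

end Invariants

lemma maxAcyclic_onFun_lex_le {V α β : Type*} [Fintype V] [LinearOrder α] [Fintype α]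
    {G : β → β → Prop} {φ : V → α × β} (hφ : Injective φ) {t : ℕ}
    (hG : ∀ T : Finset β, AcyclicSet G ↑T → #T ≤ t) :
    maxAcyclic (Prod.Lex (· < ·) G on φ) ≤ Fintype.card α * t :=
  maxAcyclic_le fun S hS => by
    rw [← card_map ⟨φ, hφ⟩]
    exact AcyclicSet.card_le_of_lex hG (by simpa using hS.image)

lemma pow_lt_two_pow_choose (s : ℕ) :
    s ^ (2 * Nat.log 2 s + 3) < 2 ^ (2 * Nat.log 2 s + 3).choose 2 := by
  set L := Nat.log 2 s
  have hchoose : (2 * L + 3).choose 2 = (L + 1) * (2 * L + 3) := by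
    rw [Nat.choose_two_right, show 2 * L + 3 - 1 = (L + 1) * 2 by omega, ← mul_assoc,
      Nat.mul_div_cancel _ two_pos, mul_comm]
  calc s ^ (2 * L + 3) < (2 ^ (L + 1)) ^ (2 * L + 3) :=
        Nat.pow_lt_pow_left (Nat.lt_pow_succ_log_self one_lt_two s) (by omega)
    _ = 2 ^ (2 * L + 3).choose 2 := by rw [← pow_mul, hchoose]

lemma natLog_add_one_le_logb_two_mul {s : ℕ} (hs : 0 < s) :
    (Nat.log 2 s + 1 : ℝ) ≤ Real.logb 2 (2 * s) := by
  rw [Real.logb_mul two_ne_zero (by positivity), Real.logb_self_eq_one one_lt_two, add_comm]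
  gcongr
  exact_mod_cast Real.natLog_le_logb s 2

lemma div_add_one_le_two_mul_div {s n : ℕ} (hs : 0 < s) (hsn : s ≤ n) :
    (((n - 1) / s + 1 : ℕ) : ℝ) ≤ 2 * n / s := by
  have hs' : (0 : ℝ) < s := by exact_mod_cast hs
  have hdiv : (((n - 1) / s : ℕ) : ℝ) ≤ n / s :=
    Nat.cast_div_le.trans (by gcongr; exact_mod_cast Nat.sub_le n 1)
  have hone : (1 : ℝ) ≤ n / s := by
    rw [le_div_iff₀ hs', one_mul]; exact_mod_cast hsn
  push_cast
  linarith [show (2 * n / s : ℝ) = n / s + n / s by ring]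

/-- Sends `u` to `(u / s, u % s)`: block number and position inside the block. -/
def blockEmbedding {s : ℕ} (n : ℕ) (hs : 0 < s) : Fin n ↪ Fin ((n - 1) / s + 1) × Fin s :=
  have hn : n ≤ ((n - 1) / s + 1) * s := by
    have : n - 1 < s * ((n - 1) / s + 1) := Nat.lt_mul_div_succ (n - 1) hs
    rw [mul_comm]; omega
  (Fin.castLEEmb hn).trans finProdFinEquiv.symm.toEmbedding

/-- For all positive integers `s ≤ n` there is an `n`-vertex tournament whose
directed cycles all have length at most `s`, with `α⃗(T) ≤ (4n/s)·log₂(2s)` and hence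
`χ⃗(T) ≥ s/(4·log₂(2s))`. -/
theorem stmt5 (s n : ℕ) (hs : 0 < s) (hsn : s ≤ n) :
    ∃ A : Fin n → Fin n → Prop,
      (∀ u v, A u v → ¬ A v u) ∧
      (∀ u v : Fin n, u ≠ v → A u v ∨ A v u) ∧
      (∀ (m : ℕ) (f : ZMod m → Fin n), IsDicycle A m f → m ≤ s) ∧
      (maxAcyclic A : ℝ) ≤ 4 * n / s * Real.logb 2 (2 * s) ∧
      (s : ℝ) / (4 * Real.logb 2 (2 * s)) ≤ (dichromatic A : ℝ) := by
  set L := Nat.log 2 s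
  obtain ⟨G, hG, hGk⟩ := exists_tournament_forall_not_isTransitiveOrdering (V := Fin s)
    (k := 2 * L + 3) (by simpa using pow_lt_two_pow_choose s)
  let φ := blockEmbedding n hs
  set A := Prod.Lex (· < ·) G on φ
  have hA : IsTournament A := hG.lex.comap φ.injective
  have hℓ := natLog_add_one_le_logb_two_mul hs
  have hα : (maxAcyclic A : ℝ) ≤ 4 * n / s * Real.logb 2 (2 * s) := calc
    (maxAcyclic A : ℝ) ≤ (((n - 1) / s + 1) * (2 * L + 2) : ℕ) := by
      have := maxAcyclic_onFun_lex_le φ.injective fun T hT => Nat.le_of_lt_succ (hT.card_lt hG hGk)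
      rw [Fintype.card_fin] at this
      exact_mod_cast this
    _ ≤ 2 * n / s * (2 * Real.logb 2 (2 * s)) := by
      push_cast
      gcongr
      · exact_mod_cast div_add_one_le_two_mul_div hs hsn
      · linarith
    _ = 4 * n / s * Real.logb 2 (2 * s) := by ring
  have hℓpos : 0 < Real.logb 2 (2 * s) := by linarith [(Nat.cast_nonneg L : (0 : ℝ) ≤ L)]
  have : Nonempty (Fin n) := ⟨⟨0, hs.trans_le hsn⟩⟩
  refine ⟨A, hA.asymm, hA.total, fun m c hc => ?_, hα,
    le_dichromatic_of_maxAcyclic_le hA.irrefl (by positivity) ?_⟩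
  · simpa using (hc.comp φ.injective).length_le_card_of_lex
  · exact hα.trans_eq (by rw [Fintype.card_fin, div_div_eq_mul_div]; ring)
end

section
/- For all integers k ≥ 3 and t ≥ 1, there exists an oriented graph D in which every directed cycle has length divisible by k, yet the list dichromatic number of D exceeds t. Specifically, take the blow-up of the directed k-cycle where each vertex is replaced by an independent set of size C(k(t−1)+1, t), with all arcs from the i-th blob to the (i+1)-st blob (indices mod k). -/
/-- For all `k ≥ 3` and `t ≥ 1` there is an oriented graph all of whose
directed cycle lengths are divisible by `k`, together with a list assignment with lists of
size `t` admitting no coloring without a monochromatic directed cycle; hence its list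
dichromatic number exceeds `t`. -/
theorem stmt8 (k t : ℕ) (hk : 3 ≤ k) (ht : 1 ≤ t) :
    ∃ (n : ℕ) (A : Fin n → Fin n → Prop),
      (∀ u v, A u v → ¬ A v u) ∧
      (∀ (m : ℕ) (f : ZMod m → Fin n), IsDicycle A m f → k ∣ m) ∧
      ∃ L : Fin n → Finset ℕ, (∀ v, (L v).card = t) ∧
        ¬ ∃ c : Fin n → ℕ, (∀ v, c v ∈ L v) ∧ ∀ col : ℕ, AcyclicSet A (c ⁻¹' {col}) := by
  haveI : NeZero k := ⟨by omega⟩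
  set N := k * (t - 1) + 1 with hN
  let V := ZMod k × {S : Finset (Fin N) // S.card = t}
  let e : V ≃ Fin (Fintype.card V) := Fintype.equivFin V
  refine ⟨Fintype.card V, fun u v => (e.symm u).1 + 1 = (e.symm v).1, ?_, ?_, ?_⟩
  · intro u v h h'
    have hx : (e.symm u).1 + (1 + 1) = (e.symm u).1 := by rw [← add_assoc, h]; exact h'
    have h2 : ((2 : ℕ) : ZMod k) = 0 := by
      have := add_eq_left.mp hx
      push_cast
      linear_combination this
    have hd := (ZMod.natCast_eq_zero_iff 2 k).mp h2
    have := Nat.le_of_dvd (by norm_num) hd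
    omega
  · intro m f hf
    obtain ⟨hm, hinj, harc⟩ := hf
    set g : ZMod m → ZMod k := fun i => (e.symm (f i)).1 with hg
    have key : ∀ j : ℕ, g (j : ZMod m) = g 0 + (j : ZMod k) := by
      intro j
      induction j with
      | zero => simp
      | succ j ih =>
        have := harc (j : ZMod m)
        push_cast
        rw [show ((j : ZMod m) + 1) = (j : ZMod m) + 1 from rfl] at this
        calc g ((j : ZMod m) + 1) = g (j : ZMod m) + 1 := (this).symm
          _ = g 0 + ((j : ZMod k) + 1) := by rw [ih, add_assoc]
    have hmz : g ((m : ℕ) : ZMod m) = g 0 := by rw [ZMod.natCast_self]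
    have : ((m : ℕ) : ZMod k) = 0 := by
      have := key m
      rw [hmz] at this
      exact (left_eq_add.mp this)
    exact (ZMod.natCast_eq_zero_iff m k).mp this
  · refine ⟨fun v => ((e.symm v).2.1).image Fin.val, ?_, ?_⟩
    · intro v
      rw [Finset.card_image_of_injective _ Fin.val_injective]
      exact (e.symm v).2.2
    · rintro ⟨c, hc, hac⟩
      have hb : ∀ x : Fin N, ∃ i : ZMod k,
          ∀ S : {S : Finset (Fin N) // S.card = t}, c (e (i, S)) ≠ x.val := by
        intro x
        by_contra h
        push_neg at h
        choose S hS using h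
        refine hac x.val k (fun i => e (i, S i)) (fun i => hS i) ⟨by omega, ?_, ?_⟩
        · intro i j hij
          have := congrArg (fun v => (e.symm v).1) hij
          simpa using this
        · intro i
          simp
      choose b hbf using hb
      have pig := Finset.exists_lt_card_fiber_of_mul_lt_card_of_maps_to
        (s := (Finset.univ : Finset (Fin N))) (t := (Finset.univ : Finset (ZMod k)))
        (f := b) (n := t - 1) (fun x _ => Finset.mem_univ _) ?_
      · obtain ⟨i, _, hi⟩ := pig
        obtain ⟨S, hSsub, hScard⟩ := Finset.exists_subset_card_eq (s := Finset.univ.filter fun x => b x = i) (n := t) (by omega)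
        have hcv := hc (e (i, ⟨S, hScard⟩))
        simp only [Equiv.symm_apply_apply, Finset.mem_image] at hcv
        obtain ⟨x, hxS, hxval⟩ := hcv
        have hbx : b x = i := by
          have := hSsub hxS
          simpa using this
        have := hbf x ⟨S, hScard⟩
        rw [hbx] at this
        exact this hxval.symm
      · simp only [Finset.card_univ, ZMod.card, Fintype.card_fin]
        omega
end

section
/- In the blow-up D of the directed k-cycle (k ≥ 3) with blobs B_1, ..., B_k and all arcs from B_i to B_{i+1} (indices mod k), suppose each vertex is assigned a list of t colors from {1,...,c} where c = k(t−1)+1, and every t-subset of {1,...,c} occurs as the list of some vertex in each blob B_i. Then D has no proper list coloring: in any coloring from the lists, some color appears in every blob, giving a monochromatic directed cycle. -/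
/-- In the blow-up of the directed `k`-cycle (`k ≥ 3`, blobs indexed by
`ZMod k` via `b`, all arcs from blob `i` to blob `i+1`), if each vertex has a list of `t`
colors from `{0, …, c-1}` where `c = k(t-1)+1`, and every `t`-subset of `{0, …, c-1}`
occurs as the list of some vertex in each blob, then there is no coloring from the lists
avoiding a monochromatic directed cycle. -/
theorem stmt9 (k t : ℕ) (hk : 3 ≤ k) (ht : 1 ≤ t) {V : Type*} [Fintype V]
    (b : V → ZMod k) (A : V → V → Prop)
    (hA : ∀ u v, A u v ↔ b v = b u + 1)
    (L : V → Finset ℕ)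
    (hLsub : ∀ v, L v ⊆ Finset.range (k * (t - 1) + 1))
    (hLcard : ∀ v, (L v).card = t)
    (hall : ∀ (i : ZMod k) (S : Finset ℕ), S ⊆ Finset.range (k * (t - 1) + 1) →
      S.card = t → ∃ v, b v = i ∧ L v = S) :
    ¬ ∃ c : V → ℕ, (∀ v, c v ∈ L v) ∧ ∀ col : ℕ, AcyclicSet A (c ⁻¹' {col}) := by
  rintro ⟨c, hc, hac⟩
  haveI : NeZero k := ⟨by omega⟩
  set R := Finset.range (k * (t - 1) + 1) with hR
  set Miss : ZMod k → Finset ℕ := fun i =>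
    R.filter (fun col => ∀ v, b v = i → c v ≠ col) with hM
  have hMiss : ∀ i, (Miss i).card ≤ t - 1 := by
    intro i
    by_contra h
    push_neg at h
    obtain ⟨S, hS, hScard⟩ := Finset.exists_subset_card_eq (show t ≤ (Miss i).card by omega)
    obtain ⟨v, hbv, hLv⟩ := hall i S (hS.trans (Finset.filter_subset _ _)) hScard
    have hcv : c v ∈ Miss i := hS (hLv ▸ hc v)
    exact (Finset.mem_filter.mp hcv).2 v hbv rfl
  have hU : ¬ R ⊆ Finset.univ.biUnion Miss := by
    intro hsub
    have h1 := Finset.card_le_card hsub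
    have h2 : (Finset.univ.biUnion Miss).card ≤ ∑ i : ZMod k, (Miss i).card :=
      Finset.card_biUnion_le
    have h3 : ∑ i : ZMod k, (Miss i).card ≤ ∑ _i : ZMod k, (t - 1) :=
      Finset.sum_le_sum fun i _ => hMiss i
    simp only [Finset.sum_const, Finset.card_univ, smul_eq_mul] at h3
    have hcard : Fintype.card (ZMod k) = k := ZMod.card k
    rw [hcard] at h3
    have hRcard : R.card = k * (t - 1) + 1 := Finset.card_range _
    omega
  obtain ⟨col, hcolR, hcolU⟩ := Finset.not_subset.mp hU
  have hcol : ∀ i : ZMod k, ∃ v, b v = i ∧ c v = col := by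
    intro i
    by_contra h
    push_neg at h
    exact hcolU (Finset.mem_biUnion.mpr ⟨i, Finset.mem_univ i,
      Finset.mem_filter.mpr ⟨hcolR, h⟩⟩)
  choose f hf1 hf2 using hcol
  refine hac col k f (fun i => hf2 i) ⟨by omega, ?_, ?_⟩
  · intro i j hij
    have := congrArg b hij
    rwa [hf1, hf1] at this
  · intro i
    rw [hA, hf1, hf1]
end

section
/- Let 0 < δ < √(ln 4). Then there exists a constant c_δ > 0 such that every digraph D of order n containing no directed triangle (directed cycle of length 3) satisfies α⃗(D) ≥ c_δ · exp(δ·√(ln n)). -/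
/-!
Argue by induction on `n = #S`, with `s = √(log n)` and `K = ⌊n e^{-δ s}⌋`. If every vertex has
out- or in-degree below `K`, a greedy argument yields an acyclic set of size `n / K ≥ e^{δ s}`.
Otherwise pick `v` with both degrees at least `K`. As there is no directed triangle, the common
out- and in-neighbourhood of `v` spans no arc, which settles the case where it is large. If not,
the exclusive out- and in-neighbourhoods `B⁺`, `B⁻` both have at least
`K - c e^{δ s} ≥ exp ((s - log 2 / δ) ^ 2)` vertices, no arc goes from `B⁺` to `B⁻`, and the union
of acyclic sets found in each by induction is acyclic. The threshold `exp ((s - log 2 / δ) ^ 2)`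
is exactly what makes these sets have size `≥ c e^{δ s} / 2`, and it stays below
`K - e^{δ s}` for large `n` precisely because `δ² < log 4`.
-/

open Finset Filter Real

lemma ZMod.forall_of_add_one {n : ℕ} [NeZero n] {P : ZMod n → Prop} {i₀ : ZMod n} (h₀ : P i₀)
    (hstep : ∀ i, P i → P (i + 1)) (i : ZMod n) : P i := by
  have key : ∀ m : ℕ, P (i₀ + m) := by
    intro m
    induction m with
    | zero => simpa using h₀
    | succ k ih => simpa [← add_assoc] using hstep _ ih
  simpa using key (i - i₀).val

variable {V : Type*} {A : V → V → Prop}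

namespace AcyclicSet

lemma of_forall_not_adj {S : Set V} (h : ∀ x ∈ S, ∀ y ∈ S, ¬ A x y) : AcyclicSet A S := by
  rintro n f hf ⟨hn, -, harc⟩
  have : NeZero n := ⟨hn.ne'⟩
  exact h _ (hf 0) _ (hf 1) (by simpa using harc 0)

lemma singleton (hA : Irreflexive A) (v : V) : AcyclicSet A {v} :=
  of_forall_not_adj fun x hx y hy => by rw [hx, hy]; exact hA v

/-- A cycle that meets `S₁` can never leave it. -/
lemma union {S₁ S₂ : Set V} (h₁ : AcyclicSet A S₁) (h₂ : AcyclicSet A S₂)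
    (hcross : ∀ x ∈ S₁, ∀ y ∈ S₂, ¬ A x y) : AcyclicSet A (S₁ ∪ S₂) := by
  rintro n f hf ⟨hn, hinj, harc⟩
  have : NeZero n := ⟨hn.ne'⟩
  by_cases hmeet : ∃ i, f i ∈ S₁
  · obtain ⟨i₀, hi₀⟩ := hmeet
    refine h₁ n f (ZMod.forall_of_add_one hi₀ fun i hi => ?_) ⟨hn, hinj, harc⟩
    exact (hf (i + 1)).resolve_right fun h => hcross _ hi _ h (harc i)
  · simp only [not_exists] at hmeet
    exact h₂ n f (fun i => (hf i).resolve_left (hmeet i)) ⟨hn, hinj, harc⟩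

lemma insert (hA : Irreflexive A) {T : Set V} {v : V}
    (hv : (∀ u ∈ T, ¬ A v u) ∨ ∀ u ∈ T, ¬ A u v) (hT : AcyclicSet A T) :
    AcyclicSet A (insert v T) := by
  rw [Set.insert_eq]
  rcases hv with hout | hin
  · exact (singleton hA v).union hT fun x hx y hy => by rw [hx]; exact hout y hy
  · rw [Set.union_comm]
    exact hT.union (singleton hA v) fun x hx y hy => by rw [hy]; exact hin x hx

lemma card_le_maxAcyclic [Fintype V] {T : Finset V} (hT : AcyclicSet A T) :
    #T ≤ maxAcyclic A :=
  le_csSup ⟨Fintype.card V, by rintro _ ⟨S, -, rfl⟩; exact card_le_univ S⟩ ⟨T, hT, rfl⟩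

end AcyclicSet

lemma exists_dicycle_three (hA : Irreflexive A) {x y z : V} (hxy : A x y) (hyz : A y z)
    (hzx : A z x) : ∃ f : ZMod 3 → V, IsDicycle A 3 f := by
  have hne : x ≠ y ∧ y ≠ z ∧ z ≠ x :=
    ⟨fun h => hA y (h ▸ hxy), fun h => hA z (h ▸ hyz), fun h => hA x (h ▸ hzx)⟩
  refine ⟨![x, y, z], by norm_num, ?_, ?_⟩
  · intro i j hij
    fin_cases i <;> fin_cases j <;> first | rfl | simp_all [eq_comm]
  · intro i
    fin_cases i <;> assumption

/-- Keep a vertex of out-degree (or in-degree) `< K`, discard its out-neighbours (or in-neighbours)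
and recurse. -/
lemma exists_acyclic_card_le_mul [DecidableEq V] [DecidableRel A] (hA : Irreflexive A) (K : ℕ)
    (S : Finset V)
    (hdeg : ∀ v ∈ S, #{u ∈ S | A v u} < K ∨ #{u ∈ S | A u v} < K) :
    ∃ T ⊆ S, AcyclicSet A T ∧ #S ≤ K * #T := by
  induction S using Finset.strongInduction with
  | H S ih =>
  obtain rfl | ⟨v, hv⟩ := S.eq_empty_or_nonempty
  · exact ⟨∅, subset_rfl, .of_forall_not_adj (by simp), by simp⟩
  obtain ⟨R, hRS, hvR, hRK, hR⟩ : ∃ R ⊆ S, v ∈ R ∧ #R ≤ K ∧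
      ((∀ u ∈ S \ R, ¬ A v u) ∨ ∀ u ∈ S \ R, ¬ A u v) := by
    rcases hdeg v hv with h | h
    · refine ⟨insert v {u ∈ S | A v u}, insert_subset hv (filter_subset _ _), mem_insert_self _ _,
        (card_insert_le _ _).trans h, Or.inl fun u hu huv => ?_⟩
      exact (mem_sdiff.1 hu).2 (mem_insert_of_mem (mem_filter.2 ⟨(mem_sdiff.1 hu).1, huv⟩))
    · refine ⟨insert v {u ∈ S | A u v}, insert_subset hv (filter_subset _ _), mem_insert_self _ _,
        (card_insert_le _ _).trans h, Or.inr fun u hu huv => ?_⟩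
      exact (mem_sdiff.1 hu).2 (mem_insert_of_mem (mem_filter.2 ⟨(mem_sdiff.1 hu).1, huv⟩))
  have hmono : ∀ p : V → Prop, [DecidablePred p] → #{u ∈ S \ R | p u} ≤ #{u ∈ S | p u} :=
    fun p _ => card_le_card (filter_subset_filter _ sdiff_subset)
  obtain ⟨T, hTS, hT, hcard⟩ := ih (S \ R) (sdiff_ssubset hRS ⟨v, hvR⟩) fun u hu =>
    (hdeg u (mem_sdiff.1 hu).1).imp (hmono _ |>.trans_lt) (hmono _ |>.trans_lt)
  have hvT : v ∉ T := fun h => (mem_sdiff.1 (hTS h)).2 hvR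
  refine ⟨insert v T, insert_subset hv (hTS.trans sdiff_subset), ?_, ?_⟩
  · rw [coe_insert]
    exact hT.insert hA (hR.imp (fun h u hu => h u (hTS hu)) (fun h u hu => h u (hTS hu)))
  · calc #S = #(S \ R) + #R := (card_sdiff_add_card_eq_card hRS).symm
      _ ≤ K * #T + K := add_le_add hcard hRK
      _ = K * #(insert v T) := by rw [card_insert_of_notMem hvT]; ring

lemma exists_acyclic_exp_le_card [DecidableEq V] [DecidableRel A] (hA : Irreflexive A) (a : ℝ)
    (S : Finset V) (hS : S.Nonempty)
    (hdeg : ∀ v ∈ S, #{u ∈ S | A v u} < ⌊#S * exp (-a)⌋₊ ∨ #{u ∈ S | A u v} < ⌊#S * exp (-a)⌋₊) :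
    ∃ T ⊆ S, AcyclicSet A T ∧ exp a ≤ #T := by
  obtain ⟨T, hTS, hT, hcard⟩ := exists_acyclic_card_le_mul hA _ S hdeg
  refine ⟨T, hTS, hT, ?_⟩
  have hS₀ : (0 : ℝ) < #S := by exact_mod_cast hS.card_pos
  have hST : (#S : ℝ) * exp a ≤ #S * #T :=
    calc (#S : ℝ) * exp a ≤ ⌊#S * exp (-a)⌋₊ * #T * exp a := by gcongr; exact_mod_cast hcard
      _ ≤ #S * exp (-a) * #T * exp a := by gcongr; exact Nat.floor_le (by positivity)
      _ = #S * #T := by rw [exp_neg]; field_simp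
  exact le_of_mul_le_mul_left hST hS₀

lemma exists_acyclic_or_exists_split [DecidableRel A] (hA : Irreflexive A)
    (hC3 : ¬ ∃ f : ZMod 3 → V, IsDicycle A 3 f) {S : Finset V} {v : V} (hv : v ∈ S) (t : ℝ) :
    (∃ T ⊆ S, AcyclicSet A T ∧ t ≤ #T) ∨
      ∃ B₁ ⊂ S, ∃ B₂ ⊂ S, Disjoint B₁ B₂ ∧ (∀ x ∈ B₁, ∀ y ∈ B₂, ¬ A x y) ∧
        (#{u ∈ S | A v u} : ℝ) - t < #B₁ ∧ (#{u ∈ S | A u v} : ℝ) - t < #B₂ := by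
  classical
  set M := {u ∈ S | A v u ∧ A u v}
  by_cases hM : t ≤ #M
  · refine Or.inl ⟨M, filter_subset _ _, .of_forall_not_adj fun x hx y hy hxy => ?_, hM⟩
    exact hC3 (exists_dicycle_three hA (mem_filter.1 (mem_coe.1 hx)).2.1 hxy
      (mem_filter.1 (mem_coe.1 hy)).2.2)
  refine Or.inr ⟨{u ∈ S | A v u ∧ ¬ A u v}, filter_ssubset.2 ⟨v, hv, fun h => hA v h.1⟩,
    {u ∈ S | A u v ∧ ¬ A v u}, filter_ssubset.2 ⟨v, hv, fun h => hA v h.1⟩,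
    disjoint_filter.2 fun u _ h₁ h₂ => h₁.2 h₂.1, fun x hx y hy hxy => ?_, ?_, ?_⟩
  · exact hC3 (exists_dicycle_three hA (mem_filter.1 hx).2.1 hxy (mem_filter.1 hy).2.1)
  · have : #{u ∈ S | A v u} ≤ #M + #{u ∈ S | A v u ∧ ¬ A u v} :=
      (card_le_card fun u hu => by by_cases A u v <;> simp_all [M]).trans (card_union_le _ _)
    have : (#{u ∈ S | A v u} : ℝ) ≤ #M + #{u ∈ S | A v u ∧ ¬ A u v} := by exact_mod_cast this
    linarith
  · have : #{u ∈ S | A u v} ≤ #M + #{u ∈ S | A u v ∧ ¬ A v u} :=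
      (card_le_card fun u hu => by by_cases A v u <;> simp_all [M]).trans (card_union_le _ _)
    have : (#{u ∈ S | A u v} : ℝ) ≤ #M + #{u ∈ S | A u v ∧ ¬ A v u} := by exact_mod_cast this
    linarith

/-- With `s = √(log n)` the left side is `exp (s² - (2 log 2 / δ) s + O(1)) + e^{δ s} + 1`, which is
`o (exp (s² - δ s))` because `δ < 2 log 2 / δ`. -/
lemma eventually_growth_bound {δ : ℝ} (hδ0 : 0 < δ) (hδ : δ < √(log 4)) :
    ∀ᶠ n : ℕ in atTop, exp ((√(log n) - log 2 / δ) ^ 2) + exp (δ * √(log n)) + 1 ≤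
      n * exp (-(δ * √(log n))) := by
  set b := log 2 / δ
  have hb : 0 < 2 * b - δ := by
    have h4 : log 4 = 2 * log 2 := by
      rw [show (4 : ℝ) = 2 ^ 2 by norm_num, log_pow]; norm_num
    have hδ2 : δ ^ 2 < 2 * log 2 := h4 ▸ (lt_sqrt hδ0.le).1 hδ
    have : 2 * b - δ = (2 * log 2 - δ ^ 2) / δ := by simp only [b]; field_simp
    rw [this]
    exact div_pos (by linarith) hδ0
  have hlin : Tendsto (fun s : ℝ => (2 * b - δ) * s - b ^ 2) atTop atTop :=
    tendsto_atTop_add_const_right _ _ (tendsto_id.const_mul_atTop hb)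
  have hquad : ∀ a : ℝ, Tendsto (fun s : ℝ => s * (s - a)) atTop atTop := fun a =>
    tendsto_id.atTop_mul_atTop₀ (tendsto_atTop_add_const_right _ _ tendsto_id)
  have hs : ∀ᶠ s : ℝ in atTop, exp ((s - b) ^ 2) + exp (δ * s) + 1 ≤ exp (s ^ 2 - δ * s) := by
    filter_upwards [hlin.eventually_ge_atTop (log 3), (hquad (2 * δ)).eventually_ge_atTop (log 3),
      (hquad δ).eventually_ge_atTop (log 3)] with s h₁ h₂ h₃
    have hthird : ∀ a, a + log 3 ≤ s ^ 2 - δ * s → exp a ≤ exp (s ^ 2 - δ * s) / 3 := fun a ha => by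
      rw [le_div_iff₀ (by norm_num), ← exp_log (show (0 : ℝ) < 3 by norm_num), ← exp_add]
      exact exp_le_exp.2 ha
    have e₁ := hthird ((s - b) ^ 2) (by nlinarith)
    have e₂ := hthird (δ * s) (by nlinarith)
    have e₃ := hthird 0 (by nlinarith)
    rw [exp_zero] at e₃
    linarith
  have hsqrt : Tendsto (fun n : ℕ => √(log n)) atTop atTop :=
    tendsto_sqrt_atTop.comp (tendsto_log_atTop.comp tendsto_natCast_atTop_atTop)
  filter_upwards [hsqrt.eventually hs, eventually_ge_atTop 1] with n h hn
  have hn' : (1 : ℝ) ≤ n := by exact_mod_cast hn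
  rw [exp_neg, ← div_eq_mul_inv]
  rwa [sq_sqrt (log_nonneg hn'), exp_sub, exp_log (by linarith)] at h

lemma half_exp_le_exp_mul_sqrt_log {δ s m : ℝ} (hδ : 0 < δ) (hm : exp ((s - log 2 / δ) ^ 2) ≤ m) :
    exp (δ * s) / 2 ≤ exp (δ * √(log m)) := by
  have hlog : (s - log 2 / δ) ^ 2 ≤ log m := by
    simpa using log_le_log (exp_pos _) hm
  have hsqrt : s - log 2 / δ ≤ √(log m) :=
    (le_abs_self _).trans ((sqrt_sq_eq_abs _).symm.trans_le (sqrt_le_sqrt hlog))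
  have hmul : δ * s - log 2 ≤ δ * √(log m) := by
    have := mul_le_mul_of_nonneg_left hsqrt hδ.le
    rwa [mul_sub, mul_div_cancel₀ _ hδ.ne'] at this
  calc exp (δ * s) / 2 = exp (δ * s - log 2) := by rw [exp_sub, exp_log two_pos]
    _ ≤ exp (δ * √(log m)) := exp_le_exp.2 hmul

lemma exists_acyclic_subset_card_ge [DecidableEq V] [DecidableRel A] (hA : Irreflexive A)
    (hC3 : ¬ ∃ f : ZMod 3 → V, IsDicycle A 3 f) {δ c : ℝ} (hδ : 0 < δ) (hc₀ : 0 ≤ c)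
    (hc₁ : c ≤ 1) {n₀ : ℕ} (hsmall : ∀ m : ℕ, m ≤ n₀ → c * exp (δ * √(log m)) ≤ 1)
    (hbig : ∀ n : ℕ, n₀ < n → exp ((√(log n) - log 2 / δ) ^ 2) + exp (δ * √(log n)) + 1 ≤
      n * exp (-(δ * √(log n))))
    (S : Finset V) (hS : S.Nonempty) :
    ∃ T ⊆ S, AcyclicSet A T ∧ c * exp (δ * √(log #S)) ≤ #T := by
  induction S using Finset.strongInduction with
  | H S ih =>
  by_cases hn : #S ≤ n₀
  · obtain ⟨v, hv⟩ := hS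
    exact ⟨{v}, singleton_subset_iff.2 hv, by simpa using AcyclicSet.singleton hA v,
      by simpa using hsmall _ hn⟩
  have hgrowth := hbig #S (not_le.1 hn)
  set s := √(log #S)
  set K := ⌊(#S : ℝ) * exp (-(δ * s))⌋₊
  have hcs : c * exp (δ * s) ≤ exp (δ * s) := mul_le_of_le_one_left (exp_pos _).le hc₁
  by_cases hdeg : ∀ v ∈ S, #{u ∈ S | A v u} < K ∨ #{u ∈ S | A u v} < K
  · obtain ⟨T, hTS, hT, hcard⟩ := exists_acyclic_exp_le_card hA (δ * s) S hS hdeg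
    exact ⟨T, hTS, hT, hcs.trans hcard⟩
  push Not at hdeg
  obtain ⟨v, hv, hout, hin⟩ := hdeg
  obtain h | ⟨B₁, hB₁, B₂, hB₂, hdisj, hnoarc, hcard₁, hcard₂⟩ :=
    exists_acyclic_or_exists_split hA hC3 hv (c * exp (δ * s))
  · exact h
  have hhalf : ∀ B ⊂ S, (K : ℝ) - c * exp (δ * s) < #B →
      ∃ T ⊆ B, AcyclicSet A T ∧ c * exp (δ * s) / 2 ≤ #T := by
    intro B hB hBcard
    have hK : (#S : ℝ) * exp (-(δ * s)) - 1 < K := Nat.sub_one_lt_floor _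
    have hE : exp ((s - log 2 / δ) ^ 2) ≤ #B := by linarith
    have hBne : B.Nonempty := card_pos.1 (by exact_mod_cast (one_le_exp (sq_nonneg _)).trans hE)
    obtain ⟨T, hTB, hT, hTcard⟩ := ih B hB hBne
    refine ⟨T, hTB, hT, le_trans ?_ hTcard⟩
    rw [mul_div_assoc]
    exact mul_le_mul_of_nonneg_left (half_exp_le_exp_mul_sqrt_log hδ hE) hc₀
  obtain ⟨T₁, hT₁B, hT₁, hT₁card⟩ := hhalf B₁ hB₁ (by linarith [(Nat.cast_le (α := ℝ)).2 hout])
  obtain ⟨T₂, hT₂B, hT₂, hT₂card⟩ := hhalf B₂ hB₂ (by linarith [(Nat.cast_le (α := ℝ)).2 hin])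
  refine ⟨T₁ ∪ T₂, union_subset (hT₁B.trans hB₁.subset) (hT₂B.trans hB₂.subset), ?_, ?_⟩
  · rw [coe_union]
    exact hT₁.union hT₂ fun x hx y hy => hnoarc x (hT₁B hx) y (hT₂B hy)
  · rw [card_union_of_disjoint (hdisj.mono hT₁B hT₂B)]
    push_cast
    linarith

/-- For every `0 < δ < √(ln 4)` there is a constant `c_δ > 0` such that
every (loop-free) digraph of order `n ≥ 1` with no directed triangle satisfies
`α⃗(D) ≥ c_δ · exp(δ·√(ln n))`. -/
theorem stmt11 (δ : ℝ) (hδ0 : 0 < δ) (hδ : δ < Real.sqrt (Real.log 4)) :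
    ∃ c : ℝ, 0 < c ∧ ∀ (V : Type) [Fintype V] (A : V → V → Prop),
      Nonempty V → Irreflexive A →
      (¬ ∃ f : ZMod 3 → V, IsDicycle A 3 f) →
      c * Real.exp (δ * Real.sqrt (Real.log (Fintype.card V))) ≤ (maxAcyclic A : ℝ) := by
  obtain ⟨n₀, hn₀⟩ := eventually_atTop.1 (eventually_growth_bound hδ0 hδ)
  have hsmall : ∀ m : ℕ, m ≤ n₀ → exp (-(δ * √(log n₀))) * exp (δ * √(log m)) ≤ 1 := by
    intro m hm
    have hlog : log m ≤ log n₀ := by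
      rcases m.eq_zero_or_pos with rfl | hm₀
      · simpa using log_natCast_nonneg n₀
      · exact log_le_log (by exact_mod_cast hm₀) (by exact_mod_cast hm)
    rw [← exp_add, exp_le_one_iff, neg_add_le_iff_le_add, add_zero]
    gcongr
  refine ⟨exp (-(δ * √(log n₀))), exp_pos _, fun V _ A _ hA hC3 => ?_⟩
  classical
  obtain ⟨T, -, hT, hcard⟩ := exists_acyclic_subset_card_ge hA hC3 hδ0 (exp_pos _).le
    (exp_le_one_iff.2 (neg_nonpos.2 (by positivity))) hsmall (fun n hn => hn₀ n hn.le) univ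
    univ_nonempty
  exact hcard.trans (by exact_mod_cast hT.card_le_maxAcyclic)
end

section
/- Let n ≥ 1, let a, b ≤ n and a′, b′ ≤ n′ with n′ ≤ n, a ≤ a′, b ≤ b′. Let X(n,a,b) be the number of edges between a fixed a-subset A of U and a fixed b-subset B of V in a uniformly random perfect matching of the complete bipartite graph with parts U, V of size n each. Then X(n,a,b) is stochastically dominated by X(n′,a′,b′): for every t, P(X(n,a,b) ≥ t) ≤ P(X(n′,a′,b′) ≥ t). -/
/-!
Deleting the last vertex `m` of `K_{m+1,m+1}` from a perfect matching `σ`, and rematching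
its old partner `σ⁻¹ m` with `σ m`, gives a perfect matching of `K_{m,m}`; this map is
`(m+1)`-to-one, and when `a, b ≤ m` it never loses an edge between the first `a` and the first
`b` vertices. Hence `P(X(m+1,a,b) ≥ t) ≤ P(X(m,a,b) ≥ t)`, and by induction `X(n,a,b)` is
dominated by `X(n',a,b)`. Enlarging `a` and `b` only adds edges to count.
-/

open Finset Equiv

namespace Equiv.Perm

/-- The last point of `Fin (m+1)` plays the role of `none`. -/
def decomposeLast (m : ℕ) : Perm (Fin (m + 1)) ≃ Option (Fin m) × Perm (Fin m) :=
  (permCongr (finSuccEquiv' (Fin.last m))).trans decomposeOption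

lemma decomposeLast_snd_apply {m : ℕ} {σ : Perm (Fin (m + 1))} {i j : Fin m}
    (h : σ i.castSucc = j.castSucc) : (decomposeLast m σ).2 i = j := by
  have hsome : permCongr (finSuccEquiv' (Fin.last m)) σ (some i) = some j := by
    simp [permCongr_apply, h]
  apply Option.some_injective
  rw [← hsome]
  exact removeNone_some _ ⟨j, hsome⟩

end Equiv.Perm

open Equiv.Perm

/-- The random variable `X(n,a,b)` evaluated at the matching `σ`. -/
def matchCount {n : ℕ} (a b : ℕ) (σ : Perm (Fin n)) : ℕ :=
  #{i : Fin n | (i : ℕ) < a ∧ (σ i : ℕ) < b}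

lemma matchCount_mono {n a b a' b' : ℕ} (haa : a ≤ a') (hbb : b ≤ b') (σ : Perm (Fin n)) :
    matchCount a b σ ≤ matchCount a' b' σ :=
  card_le_card fun _ hi => by
    simp only [mem_filter, mem_univ, true_and] at hi ⊢
    omega

lemma matchCount_le_decomposeLast {m a b : ℕ} (ha : a ≤ m) (hb : b ≤ m)
    (σ : Perm (Fin (m + 1))) : matchCount a b σ ≤ matchCount a b (decomposeLast m σ).2 := by
  refine card_le_card_of_surjOn Fin.castSucc fun k hk => ?_
  simp only [coe_filter, mem_univ, true_and, Set.mem_ofPred_eq] at hk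
  obtain ⟨i, rfl⟩ : ∃ i : Fin m, i.castSucc = k := ⟨k.castLT (by omega), Fin.castSucc_castLT _ _⟩
  obtain ⟨j, hj⟩ : ∃ j : Fin m, j.castSucc = σ i.castSucc :=
    ⟨(σ i.castSucc).castLT (by omega), Fin.castSucc_castLT _ _⟩
  refine ⟨i, ?_, rfl⟩
  simp only [coe_filter, mem_univ, true_and, Set.mem_ofPred_eq,
    decomposeLast_snd_apply hj.symm]
  rw [← hj] at hk
  simpa using hk

def tailSet (n a b t : ℕ) : Finset (Perm (Fin n)) :=
  {σ | t ≤ matchCount a b σ}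

@[simp]
lemma mem_tailSet {n a b t : ℕ} {σ : Perm (Fin n)} :
    σ ∈ tailSet n a b t ↔ t ≤ matchCount a b σ := by
  simp [tailSet]

/-- `P(X(n,a,b) ≥ t)` for a uniformly random perfect matching. -/
noncomputable def tailProb (n a b t : ℕ) : ℝ :=
  #(tailSet n a b t) / n.factorial

lemma tailProb_mono {n a b a' b' : ℕ} (haa : a ≤ a') (hbb : b ≤ b') (t : ℕ) :
    tailProb n a b t ≤ tailProb n a' b' t := by
  refine div_le_div_of_nonneg_right ?_ (Nat.cast_nonneg _)
  exact_mod_cast card_le_card fun σ hσ => by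
    rw [mem_tailSet] at hσ ⊢
    exact hσ.trans (matchCount_mono haa hbb σ)

lemma card_tailSet_succ_le {m a b : ℕ} (ha : a ≤ m) (hb : b ≤ m) (t : ℕ) :
    #(tailSet (m + 1) a b t) ≤ (m + 1) * #(tailSet m a b t) :=
  calc #(tailSet (m + 1) a b t)
      ≤ #(univ ×ˢ tailSet m a b t) := by
        refine card_le_card_of_injOn (decomposeLast m) (fun σ hσ => ?_)
          (decomposeLast m).injective.injOn
        rw [mem_coe, mem_tailSet] at hσ
        simpa using hσ.trans (matchCount_le_decomposeLast ha hb σ)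
    _ = (m + 1) * #(tailSet m a b t) := by
        rw [card_product, card_univ, Fintype.card_option, Fintype.card_fin]

lemma tailProb_succ_le {m a b : ℕ} (ha : a ≤ m) (hb : b ≤ m) (t : ℕ) :
    tailProb (m + 1) a b t ≤ tailProb m a b t := by
  have hcard : (#(tailSet (m + 1) a b t) : ℝ) ≤ (m + 1) * #(tailSet m a b t) := by
    exact_mod_cast card_tailSet_succ_le ha hb t
  rw [tailProb, tailProb, Nat.factorial_succ, Nat.cast_mul, Nat.cast_succ,
    div_le_div_iff₀ (by positivity) (by positivity)]
  calc _ ≤ (m + 1) * (#(tailSet m a b t) : ℝ) * m.factorial := by gcongr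
    _ = _ := by ring

lemma tailProb_antitone {n n' a b : ℕ} (ha : a ≤ n') (hb : b ≤ n') (hnn : n' ≤ n) (t : ℕ) :
    tailProb n a b t ≤ tailProb n' a b t :=
  antitoneOn_nat_Ici_of_succ_le (f := fun n => tailProb n a b t)
    (fun _ hm => tailProb_succ_le (ha.trans hm) (hb.trans hm) t)
    (le_refl n') hnn hnn

theorem stmt15_general (n n' a b a' b' : ℕ) (hnn : n' ≤ n)
    (ha' : a' ≤ n') (hb' : b' ≤ n')
    (haa : a ≤ a') (hbb : b ≤ b') (t : ℕ) :
    ((Finset.univ.filter (fun σ : Equiv.Perm (Fin n) =>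
        t ≤ (Finset.univ.filter
          (fun i : Fin n => (i : ℕ) < a ∧ ((σ i : ℕ) < b))).card)).card : ℝ)
      / (Nat.factorial n) ≤
    ((Finset.univ.filter (fun σ : Equiv.Perm (Fin n') =>
        t ≤ (Finset.univ.filter
          (fun i : Fin n' => (i : ℕ) < a' ∧ ((σ i : ℕ) < b'))).card)).card : ℝ)
      / (Nat.factorial n') :=
  calc tailProb n a b t ≤ tailProb n' a b t :=
        tailProb_antitone (haa.trans ha') (hbb.trans hb') hnn t
    _ ≤ tailProb n' a' b' t := tailProb_mono haa hbb t

/-- Let `X(n,a,b)` count, in a uniformly random perfect matching of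
`K_{n,n}` (a uniform permutation of `Fin n`), the edges between the first `a` vertices of
one side and the first `b` of the other. If `n' ≤ n`, `a ≤ a'`, `b ≤ b'` (with
`a,b ≤ n`, `a',b' ≤ n'`), then `X(n,a,b)` is stochastically dominated by `X(n',a',b')`:
for every `t`, `P(X(n,a,b) ≥ t) ≤ P(X(n',a',b') ≥ t)`. -/
theorem stmt15 (n n' a b a' b' : ℕ) (hn' : 1 ≤ n') (hnn : n' ≤ n)
    (ha : a ≤ n) (hb : b ≤ n) (ha' : a' ≤ n') (hb' : b' ≤ n')
    (haa : a ≤ a') (hbb : b ≤ b') (t : ℕ) :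
    ((Finset.univ.filter (fun σ : Equiv.Perm (Fin n) =>
        t ≤ (Finset.univ.filter
          (fun i : Fin n => (i : ℕ) < a ∧ ((σ i : ℕ) < b))).card)).card : ℝ)
      / (Nat.factorial n) ≤
    ((Finset.univ.filter (fun σ : Equiv.Perm (Fin n') =>
        t ≤ (Finset.univ.filter
          (fun i : Fin n' => (i : ℕ) < a' ∧ ((σ i : ℕ) < b'))).card)).card : ℝ)
      / (Nat.factorial n') :=
  stmt15_general n n' a b a' b' hnn ha' hb' haa hbb t
end

section
/- With notation as above, X(n+1, a, b) is stochastically dominated by X(n, a, b) for all a, b ≤ n. -/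
open Finset

namespace Equiv.Perm

/-- The matching with the edge at the last vertex removed, both sides relabelled
order-preservingly. -/
noncomputable def deleteLast {n : ℕ} (σ : Perm (Fin (n + 1))) : Perm (Fin n) :=
  removeNone ((finSuccEquiv' (Fin.last n)).symm.trans (σ.trans (finSuccEquiv' (σ (Fin.last n)))))

variable {n : ℕ}

theorem succAbove_deleteLast_apply (σ : Perm (Fin (n + 1))) (i : Fin n) :
    (σ (Fin.last n)).succAbove (σ.deleteLast i) = σ i.castSucc := by
  have hne : σ i.castSucc ≠ σ (Fin.last n) := σ.injective.ne (Fin.castSucc_lt_last i).ne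
  obtain ⟨j, hj⟩ := Fin.exists_succAbove_eq hne
  have hsome : ((finSuccEquiv' (Fin.last n)).symm.trans
      (σ.trans (finSuccEquiv' (σ (Fin.last n))))) (some i) = some j := by
    simp [finSuccEquiv'_symm_some, Fin.succAbove_last, ← hj, finSuccEquiv'_succAbove]
  have hdel : σ.deleteLast i = j :=
    Option.some_injective _ ((removeNone_some _ ⟨j, hsome⟩).trans hsome)
  rw [hdel, hj]

theorem deleteLast_apply_le (σ : Perm (Fin (n + 1))) (i : Fin n) :
    (σ.deleteLast i : ℕ) ≤ σ i.castSucc := by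
  rw [← succAbove_deleteLast_apply]
  unfold Fin.succAbove
  split <;> simp

theorem eq_of_apply_last_eq_of_deleteLast_eq {σ τ : Perm (Fin (n + 1))}
    (hlast : σ (Fin.last n) = τ (Fin.last n)) (hdel : σ.deleteLast = τ.deleteLast) : σ = τ := by
  ext x : 1
  induction x using Fin.lastCases with
  | last => exact hlast
  | cast i => rw [← succAbove_deleteLast_apply, ← succAbove_deleteLast_apply, hlast, hdel]

theorem card_le_succ_mul_card_of_deleteLast_mem {S : Finset (Perm (Fin (n + 1)))}
    {T : Finset (Perm (Fin n))} (hST : ∀ σ ∈ S, σ.deleteLast ∈ T) : #S ≤ (n + 1) * #T := by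
  calc #S ≤ #((univ : Finset (Fin (n + 1))) ×ˢ T) :=
        card_le_card_of_injOn (fun σ => (σ (Fin.last n), σ.deleteLast))
          (fun σ hσ => mem_product.2 ⟨mem_univ _, hST σ hσ⟩)
          (fun σ _ τ _ h => eq_of_apply_last_eq_of_deleteLast_eq (Prod.ext_iff.1 h).1
            (Prod.ext_iff.1 h).2)
    _ = (n + 1) * #T := by rw [card_product, card_univ, Fintype.card_fin]

end Equiv.Perm

/-- `X(m, a, b)` for the matching `i ↦ σ i`, with `A = {i < a}` and `B = {j < b}`. -/
def edgesBetween {m : ℕ} (σ : Equiv.Perm (Fin m)) (a b : ℕ) : ℕ :=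
  #{i : Fin m | (i : ℕ) < a ∧ (σ i : ℕ) < b}

theorem edgesBetween_le_edgesBetween_deleteLast {n a : ℕ} (ha : a ≤ n)
    (σ : Equiv.Perm (Fin (n + 1))) (b : ℕ) :
    edgesBetween σ a b ≤ edgesBetween σ.deleteLast a b := by
  refine card_le_card_of_surjOn Fin.castSucc fun j hj => ?_
  simp only [coe_filter, mem_univ, true_and, Set.mem_ofPred_eq] at hj
  have hjn : (j : ℕ) < n := hj.1.trans_le ha
  refine ⟨⟨j, hjn⟩, ?_, rfl⟩
  simp only [coe_filter, mem_univ, true_and, Set.mem_ofPred_eq]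
  exact ⟨hj.1, (σ.deleteLast_apply_le _).trans_lt hj.2⟩

theorem stmt16_general (n a b : ℕ) (ha : a ≤ n) (t : ℕ) :
    ((Finset.univ.filter (fun σ : Equiv.Perm (Fin (n + 1)) =>
        t ≤ (Finset.univ.filter
          (fun i : Fin (n + 1) => (i : ℕ) < a ∧ ((σ i : ℕ) < b))).card)).card : ℝ)
      / (Nat.factorial (n + 1)) ≤
    ((Finset.univ.filter (fun σ : Equiv.Perm (Fin n) =>
        t ≤ (Finset.univ.filter
          (fun i : Fin n => (i : ℕ) < a ∧ ((σ i : ℕ) < b))).card)).card : ℝ)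
      / (Nat.factorial n) := by
  have hcard := Equiv.Perm.card_le_succ_mul_card_of_deleteLast_mem
    (S := {σ | t ≤ edgesBetween σ a b}) (T := {τ | t ≤ edgesBetween τ a b})
    fun σ hσ => by
      simp only [mem_filter, mem_univ, true_and] at hσ ⊢
      exact hσ.trans (edgesBetween_le_edgesBetween_deleteLast ha σ b)
  rw [Nat.factorial_succ, Nat.cast_mul, ← div_div, div_le_div_iff_of_pos_right (by positivity),
    div_le_iff₀' (by positivity)]
  exact_mod_cast hcard

/-- With `X(n,a,b)` as above (edges of a uniformly random perfect matching
of `K_{n,n}` between fixed sets of sizes `a` and `b`), `X(n+1,a,b)` is stochastically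
dominated by `X(n,a,b)` for all `a, b ≤ n`. -/
theorem stmt16 (n a b : ℕ) (hn : 1 ≤ n) (ha : a ≤ n) (hb : b ≤ n) (t : ℕ) :
    ((Finset.univ.filter (fun σ : Equiv.Perm (Fin (n + 1)) =>
        t ≤ (Finset.univ.filter
          (fun i : Fin (n + 1) => (i : ℕ) < a ∧ ((σ i : ℕ) < b))).card)).card : ℝ)
      / (Nat.factorial (n + 1)) ≤
    ((Finset.univ.filter (fun σ : Equiv.Perm (Fin n) =>
        t ≤ (Finset.univ.filter
          (fun i : Fin n => (i : ℕ) < a ∧ ((σ i : ℕ) < b))).card)).card : ℝ)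
      / (Nat.factorial n) :=
  stmt16_general n a b ha t
end
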